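/- Let A₁, A₂ be essentially small abelian categories and 0 → F' → F → F'' → 0 a short exact sequence of exact functors A₁ → A₂ (i.e. the sequence is exact when evaluated at every object). Then the induced sequence of ind-extensions 0 → Ind(F') → Ind(F) → Ind(F'') → 0 is a short exact sequence of functors Ind(A₁) → Ind(A₂). -/

import Mathlib

/-!
Every ind-object `X` is the filtered colimit of the representables `Ind.yoneda.obj M` of its
presentation, and the three extensions commute with this colimit. On a representable the
sequence is, up to the isomorphisms `eF', eF, eF''`, the image of `0 → F' M → F M → F'' M → 0`
under the exact functor `Ind.yoneda`, hence short exact. Filtered colimits are exact in `Ind A₂`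
(AB5), so the colimit of these short exact sequences, which is the sequence at `X`, is short exact.
-/

open CategoryTheory CategoryTheory.Limits

universe v u

namespace CategoryTheory.ShortComplex

theorem exists_shortExact_mk_of_iso {C : Type*} [Category C] [HasZeroMorphisms C]
    {S : ShortComplex C} (hS : S.ShortExact) {X₁ X₂ X₃ : C} (f : X₁ ⟶ X₂) (g : X₂ ⟶ X₃)
    (e₁ : X₁ ≅ S.X₁) (e₂ : X₂ ≅ S.X₂) (e₃ : X₃ ≅ S.X₃)
    (comm₁₂ : f ≫ e₂.hom = e₁.hom ≫ S.f) (comm₂₃ : g ≫ e₃.hom = e₂.hom ≫ S.g) :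
    ∃ w : f ≫ g = 0, (ShortComplex.mk f g w).ShortExact := by
  have w : f ≫ g = 0 := by
    rw [← cancel_mono e₃.hom, Category.assoc, comm₂₃, reassoc_of% comm₁₂, S.zero, comp_zero,
      zero_comp]
  exact ⟨w, shortExact_of_iso (isoMk e₁ e₂ e₃ comm₁₂.symm comm₂₃.symm).symm hS⟩

theorem shortExact_of_evaluation {J C : Type*} [Category J] [Category C] [Abelian C]
    {S : ShortComplex (J ⥤ C)} (hS : ∀ j, (S.map ((evaluation J C).obj j)).ShortExact) :
    S.ShortExact where
  exact := by
    rw [exact_iff_isZero_homology]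
    refine Functor.isZero _ fun j => ?_
    exact ((exact_iff_isZero_homology _).1 (hS j).exact).of_iso
      (S.mapHomologyIso ((evaluation J C).obj j)).symm
  mono_f := (NatTrans.mono_iff_mono_app _).2 fun j => (hS j).mono_f
  epi_g := (NatTrans.epi_iff_epi_app _).2 fun j => (hS j).epi_g

end CategoryTheory.ShortComplex

theorem CategoryTheory.Limits.app_colimit_comp_preservesColimitIso_hom {J C D : Type*}
    [Category J] [Category C] [Category D] (F : J ⥤ C) [HasColimit F] {G H : C ⥤ D}
    (γ : G ⟶ H) [PreservesColimit F G] [PreservesColimit F H] :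
    γ.app (colimit F) ≫ (preservesColimitIso H F).hom =
      (preservesColimitIso G F).hom ≫ colimMap (Functor.whiskerLeft F γ) :=
  (isColimitOfPreserves G (colimit.isColimit F)).hom_ext fun j => by simp

theorem CategoryTheory.Ind.exists_shortExact_app_of_yoneda {C : Type u} [Category.{v} C]
    {D : Type*} [Category.{v} D] [Abelian D] [HasFilteredColimits D] [AB5 D]
    {G' G G'' : Ind C ⥤ D} [PreservesFilteredColimits G'] [PreservesFilteredColimits G]
    [PreservesFilteredColimits G''] (α : G' ⟶ G) (β : G ⟶ G'')
    (h : ∀ M : C, ∃ w : α.app (Ind.yoneda.obj M) ≫ β.app (Ind.yoneda.obj M) = 0,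
      (ShortComplex.mk _ _ w).ShortExact) (X : Ind C) :
    ∃ w : α.app X ≫ β.app X = 0, (ShortComplex.mk _ _ w).ShortExact := by
  have w : Functor.whiskerLeft (X.presentation.F ⋙ Ind.yoneda) α ≫
      Functor.whiskerLeft (X.presentation.F ⋙ Ind.yoneda) β = 0 := by
    ext j
    exact (h _).choose
  have hS : ((ShortComplex.mk _ _ w).map colim).ShortExact :=
    (ShortComplex.shortExact_of_evaluation fun j => (h _).choose_spec).map_of_exact colim
  let e (H : Ind C ⥤ D) [PreservesFilteredColimits H] :
      H.obj X ≅ colimit ((X.presentation.F ⋙ Ind.yoneda) ⋙ H) :=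
    H.mapIso (Ind.colimitPresentationCompYoneda X).symm ≪≫
      preservesColimitIso H (X.presentation.F ⋙ Ind.yoneda)
  have comm {H H' : Ind C ⥤ D} [PreservesFilteredColimits H] [PreservesFilteredColimits H']
      (γ : H ⟶ H') : γ.app X ≫ (e H').hom =
        (e H).hom ≫ colimMap (Functor.whiskerLeft (X.presentation.F ⋙ Ind.yoneda) γ) := by
    simp only [e, Iso.trans_hom, Functor.mapIso_hom, Iso.symm_hom, Category.assoc,
      ← app_colimit_comp_preservesColimitIso_hom, NatTrans.naturality_assoc]
  exact ShortComplex.exists_shortExact_mk_of_iso hS _ _ (e G') (e G) (e G'') (comm α) (comm β)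

theorem stmt11_general {A₁ A₂ : Type u} [SmallCategory A₁] [SmallCategory A₂] [Abelian A₂]
    (F' F F'' : A₁ ⥤ A₂)
    (α : F' ⟶ F) (β : F ⟶ F'')
    (w : ∀ M : A₁, α.app M ≫ β.app M = 0)
    (hse : ∀ M : A₁, (ShortComplex.mk (α.app M) (β.app M) (w M)).ShortExact)
    (IF' IF IF'' : Ind A₁ ⥤ Ind A₂)
    [PreservesFilteredColimits IF'] [PreservesFilteredColimits IF]
    [PreservesFilteredColimits IF'']
    (eF' : (Ind.yoneda (C := A₁)) ⋙ IF' ≅ F' ⋙ (Ind.yoneda (C := A₂)))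
    (eF : (Ind.yoneda (C := A₁)) ⋙ IF ≅ F ⋙ (Ind.yoneda (C := A₂)))
    (eF'' : (Ind.yoneda (C := A₁)) ⋙ IF'' ≅ F'' ⋙ (Ind.yoneda (C := A₂)))
    (Iα : IF' ⟶ IF) (Iβ : IF ⟶ IF'')
    (hIα : Functor.whiskerLeft (Ind.yoneda (C := A₁)) Iα ≫ eF.hom =
      eF'.hom ≫ Functor.whiskerRight α (Ind.yoneda (C := A₂)))
    (hIβ : Functor.whiskerLeft (Ind.yoneda (C := A₁)) Iβ ≫ eF''.hom =
      eF.hom ≫ Functor.whiskerRight β (Ind.yoneda (C := A₂))) :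
    ∀ X : Ind A₁, ∃ wI : Iα.app X ≫ Iβ.app X = 0,
      (ShortComplex.mk (Iα.app X) (Iβ.app X) wI).ShortExact := by
  have hα (M : A₁) :
      Iα.app (Ind.yoneda.obj M) ≫ eF.hom.app M = eF'.hom.app M ≫ Ind.yoneda.map (α.app M) := by
    simpa using NatTrans.congr_app hIα M
  have hβ (M : A₁) :
      Iβ.app (Ind.yoneda.obj M) ≫ eF''.hom.app M = eF.hom.app M ≫ Ind.yoneda.map (β.app M) := by
    simpa using NatTrans.congr_app hIβ M
  exact Ind.exists_shortExact_app_of_yoneda Iα Iβ fun M =>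
    ShortComplex.exists_shortExact_mk_of_iso ((hse M).map_of_exact Ind.yoneda) _ _
      (eF'.app M) (eF.app M) (eF''.app M) (hα M) (hβ M)

/-- Lemma 5.6: a short exact sequence `0 → F' → F → F'' → 0` of exact functors between
essentially small abelian categories induces, on the (filtered-colimit preserving)
ind-extensions, a sequence `0 → Ind F' → Ind F → Ind F'' → 0` of functors between the
ind-categories which is again short exact objectwise. -/
theorem stmt11 {A₁ A₂ : Type u} [SmallCategory A₁] [SmallCategory A₂] [Abelian A₁] [Abelian A₂]
    [Abelian (Ind A₂)] [(Ind.yoneda (C := A₂)).Additive]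
    [PreservesFiniteLimits (Ind.yoneda (C := A₂))]
    [PreservesFiniteColimits (Ind.yoneda (C := A₂))]
    (F' F F'' : A₁ ⥤ A₂)
    [F'.Additive] [PreservesFiniteLimits F'] [PreservesFiniteColimits F']
    [F.Additive] [PreservesFiniteLimits F] [PreservesFiniteColimits F]
    [F''.Additive] [PreservesFiniteLimits F''] [PreservesFiniteColimits F'']
    (α : F' ⟶ F) (β : F ⟶ F'')
    (w : ∀ M : A₁, α.app M ≫ β.app M = 0)
    (hse : ∀ M : A₁, (ShortComplex.mk (α.app M) (β.app M) (w M)).ShortExact)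
    (IF' IF IF'' : Ind A₁ ⥤ Ind A₂)
    [PreservesFilteredColimits IF'] [PreservesFilteredColimits IF]
    [PreservesFilteredColimits IF'']
    (eF' : (Ind.yoneda (C := A₁)) ⋙ IF' ≅ F' ⋙ (Ind.yoneda (C := A₂)))
    (eF : (Ind.yoneda (C := A₁)) ⋙ IF ≅ F ⋙ (Ind.yoneda (C := A₂)))
    (eF'' : (Ind.yoneda (C := A₁)) ⋙ IF'' ≅ F'' ⋙ (Ind.yoneda (C := A₂)))
    (Iα : IF' ⟶ IF) (Iβ : IF ⟶ IF'')
    (hIα : Functor.whiskerLeft (Ind.yoneda (C := A₁)) Iα ≫ eF.hom =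
      eF'.hom ≫ Functor.whiskerRight α (Ind.yoneda (C := A₂)))
    (hIβ : Functor.whiskerLeft (Ind.yoneda (C := A₁)) Iβ ≫ eF''.hom =
      eF.hom ≫ Functor.whiskerRight β (Ind.yoneda (C := A₂))) :
    ∀ X : Ind A₁, ∃ wI : Iα.app X ≫ Iβ.app X = 0,
      (ShortComplex.mk (Iα.app X) (Iβ.app X) wI).ShortExact :=
  stmt11_general F' F F'' α β w hse IF' IF IF'' eF' eF eF'' Iα Iβ hIα hIβ
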